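/- With the notation of the huberized Weibull tail M-functional: define λ̃(α) = ∫₁^∞ [h̃(y^α)]ᵥᵘ dF̃_W(y; α0) − μ̃ where μ̃ = v + ∫ᵥᵘ exp(−c0·(h̃^←(z) − 1)) dz. Then λ̃(α0) = 0, i.e., α0 is a root of λ̃ (Fisher consistency of the M-estimator at the Weibull model). -/

import Mathlib

/-!
Substituting `t = y ^ α0` turns `F̃_W(·; α0)` into the exponential law of rate `c0` shifted to
`1`. For a random variable `T` with that law, the layer-cake identity
`[w]ᵥᵘ = v + |[v, u) ∩ (-∞, w)|` and Fubini give
`E [h̃(T)]ᵥᵘ = v + ∫ᵥᵘ P(h̃(T) > z) dz`. Since `h̃ ≤ -1 = h̃(1)` on `[1, 1/c0]` and `h̃` increases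
strictly where `c0 t ≥ 1`, for `z > -1` the event `h̃(T) > z` is `T > h̃^←(z)`, of probability
`exp (-c0 (h̃^←(z) - 1))`.
-/

open Real Set MeasureTheory

/-- `h t = (c0 t - 1) log t - 1`. -/
noncomputable def h (c0 t : ℝ) : ℝ := (c0 * t - 1) * Real.log t - 1

/-- Generalized inverse `h̃^←(y) = inf {t ≥ 1 : h t ≥ y}`. -/
noncomputable def hinv (c0 y : ℝ) : ℝ := sInf {t : ℝ | 1 ≤ t ∧ y ≤ h c0 t}

/-- Truncation `[z]ᵥᵘ = min (max z v) u`. -/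
noncomputable def trunc (v u z : ℝ) : ℝ := min (max z v) u

/-- Density of the Weibull distribution truncated at 1. -/
noncomputable def truncDens (c0 α y : ℝ) : ℝ :=
  c0 * α * y ^ (α - 1) * Real.exp (-c0 * (y ^ α - 1))

open Filter

section h

variable {c0 : ℝ}

lemma measurable_h (c0 : ℝ) : Measurable (h c0) := by
  unfold h; fun_prop

lemma continuousOn_h (c0 : ℝ) : ContinuousOn (h c0) (Ici 1) := by
  unfold h
  exact ((continuousOn_const.mul continuousOn_id).sub continuousOn_const).mul
    (continuousOn_log.mono fun t ht => (zero_lt_one.trans_le ht).ne') |>.sub continuousOn_const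

lemma h_one (c0 : ℝ) : h c0 1 = -1 := by simp [h]

lemma one_lt_mul_of_neg_one_lt_h {t : ℝ} (ht : 1 ≤ t) (hh : -1 < h c0 t) : 1 < c0 * t := by
  by_contra! hct
  have : (c0 * t - 1) * log t ≤ 0 :=
    mul_nonpos_of_nonpos_of_nonneg (by linarith) (log_nonneg ht)
  simp only [h] at hh
  linarith

lemma h_lt_h_of_one_le_mul {s t : ℝ} (hs : 1 ≤ s) (hcs : 1 ≤ c0 * s) (hst : s < t) :
    h c0 s < h c0 t := by
  have hc0 : 0 < c0 := by nlinarith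
  have hlog : log s ≤ log t := log_le_log (by linarith) hst.le
  have hlog_pos : 0 < log t := log_pos (by linarith)
  have hct : c0 * s < c0 * t := by gcongr
  simp only [h]
  nlinarith [log_nonneg hs]

lemma tendsto_h_atTop (hc0 : 0 < c0) : Tendsto (h c0) atTop atTop := by
  refine tendsto_atTop_add_const_right _ (-1) (Tendsto.atTop_mul_atTop₀ ?_ tendsto_log_atTop)
  exact tendsto_atTop_add_const_right _ (-1) (tendsto_id.const_mul_atTop hc0)

lemma one_le_hinv_and_h_hinv_eq {z : ℝ} (hc0 : 0 < c0) (hz : -1 < z) :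
    1 ≤ hinv c0 z ∧ h c0 (hinv c0 z) = z := by
  set S := {t : ℝ | 1 ≤ t ∧ z ≤ h c0 t}
  have hS_ne : S.Nonempty :=
    ((eventually_ge_atTop 1).and ((tendsto_h_atTop hc0).eventually_ge_atTop z)).exists
  have hS_bdd : BddBelow S := ⟨1, fun t ht => ht.1⟩
  have hS_closed : IsClosed S :=
    (continuousOn_h c0).preimage_isClosed_of_isClosed isClosed_Ici isClosed_Ici
  have hmem : hinv c0 z ∈ S := hS_closed.csInf_mem hS_ne hS_bdd
  refine ⟨hmem.1, le_antisymm ?_ hmem.2⟩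
  by_contra! hlt
  obtain ⟨t, ht, htz⟩ := intermediate_value_Icc hmem.1
    ((continuousOn_h c0).mono Icc_subset_Ici_self) ⟨(h_one c0).trans_le hz.le, hlt.le⟩
  have : hinv c0 z ≤ t := csInf_le hS_bdd ⟨ht.1, htz.ge⟩
  rw [le_antisymm ht.2 this] at htz
  exact hlt.ne' htz

lemma setOf_lt_h_inter_Ioi_one {z : ℝ} (hc0 : 0 < c0) (hz : -1 < z) :
    {t | z < h c0 t} ∩ Ioi 1 = Ioi (hinv c0 z) := by
  obtain ⟨h1, hz_eq⟩ := one_le_hinv_and_h_hinv_eq hc0 hz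
  have hc : 1 ≤ c0 * hinv c0 z := (one_lt_mul_of_neg_one_lt_h h1 (by rwa [hz_eq])).le
  ext t
  simp only [mem_inter_iff, mem_ofPred_eq, mem_Ioi]
  constructor
  · rintro ⟨hzt, ht⟩
    refine lt_of_le_of_ne (csInf_le ⟨1, fun s hs => hs.1⟩ ⟨ht.le, hzt.le⟩) ?_
    rintro rfl
    exact hzt.ne' hz_eq
  · intro ht
    exact ⟨hz_eq ▸ h_lt_h_of_one_le_mul h1 hc ht, h1.trans_lt ht⟩

end h

section exponential

variable {c0 : ℝ}

lemma hasDerivAt_neg_exp (c0 t : ℝ) :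
    HasDerivAt (fun s => -exp (-c0 * (s - 1))) (c0 * exp (-c0 * (t - 1))) t := by
  refine (((hasDerivAt_id' t).sub_const 1).const_mul (-c0)).exp.neg.congr_deriv ?_
  ring

lemma tendsto_neg_exp_atTop (hc0 : 0 < c0) :
    Tendsto (fun s => -exp (-c0 * (s - 1))) atTop (nhds 0) := by
  have hlin : Tendsto (fun s => -c0 * (s + -1)) atTop atBot :=
    (tendsto_atTop_add_const_right _ (-1) tendsto_id).const_mul_atTop_of_neg (neg_lt_zero.2 hc0)
  simpa [sub_eq_add_neg] using (tendsto_exp_atBot.comp hlin).neg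

lemma integrableOn_exp_tail (hc0 : 0 < c0) (a : ℝ) :
    IntegrableOn (fun t => c0 * exp (-c0 * (t - 1))) (Ioi a) :=
  integrableOn_Ioi_deriv_of_nonneg' (fun t _ => hasDerivAt_neg_exp c0 t)
    (fun t _ => by positivity) (tendsto_neg_exp_atTop hc0)

lemma integral_exp_tail (hc0 : 0 < c0) (a : ℝ) :
    ∫ t in Ioi a, c0 * exp (-c0 * (t - 1)) = exp (-c0 * (a - 1)) := by
  simpa using integral_Ioi_of_hasDerivAt_of_nonneg' (fun t _ => hasDerivAt_neg_exp c0 t)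
    (fun t _ => by positivity) (tendsto_neg_exp_atTop hc0)

end exponential

lemma integral_comp_rpow_mul_truncDens {α : ℝ} (hα : 0 < α) (c0 : ℝ) (g : ℝ → ℝ) :
    ∫ y in Ioi 1, g (y ^ α) * truncDens c0 α y
      = ∫ t in Ioi 1, g t * (c0 * exp (-c0 * (t - 1))) := by
  rw [← integral_comp_rpow_Ioi_of_pos' hα zero_le_one
    (g := fun t => g t * (c0 * exp (-c0 * (t - 1)))), one_rpow]
  refine setIntegral_congr_fun measurableSet_Ioi fun y _ => ?_
  simp only [truncDens, smul_eq_mul]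
  ring

lemma trunc_eq_add_volume_Ico_inter_Iio {v u : ℝ} (hvu : v ≤ u) (w : ℝ) :
    trunc v u w = v + volume.real (Ico v u ∩ Iio w) := by
  rw [Ico_inter_Iio, measureReal_def, Real.volume_Ico, ENNReal.toReal_ofReal', trunc]
  rcases le_total w v with hwv | hvw
  · simp [hwv, hvu, hwv.trans hvu]
  · rcases le_total w u with hwu | huw <;> simp [*]

theorem integral_trunc_comp_mul_eq {α : Type*} [MeasurableSpace α] {μ : Measure α} [SFinite μ]
    {f D : α → ℝ} (hf : Measurable f) (hD : Integrable D μ) {v u : ℝ} (hvu : v ≤ u) :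
    ∫ x, trunc v u (f x) * D x ∂μ
      = v * ∫ x, D x ∂μ + ∫ z in v..u, ∫ x in {x | z < f x}, D x ∂μ := by
  set F : α → ℝ → ℝ := fun x z => (Iio (f x)).indicator (fun _ => D x) z
  have hF : Integrable (Function.uncurry F) (μ.prod (volume.restrict (Ico v u))) :=
    (hD.comp_fst _).indicator (measurableSet_lt measurable_snd (hf.comp measurable_fst))
  have hF_inner : ∀ x, ∫ z in Ico v u, F x z = (trunc v u (f x) - v) * D x := fun x => by
    rw [setIntegral_indicator measurableSet_Iio, setIntegral_const, smul_eq_mul,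
      trunc_eq_add_volume_Ico_inter_Iio hvu, add_sub_cancel_left]
  have hF_outer : ∀ z, ∫ x, F x z ∂μ = ∫ x in {x | z < f x}, D x ∂μ := fun z =>
    integral_indicator (measurableSet_lt measurable_const hf)
  calc ∫ x, trunc v u (f x) * D x ∂μ
      = ∫ x, (v * D x + ∫ z in Ico v u, F x z) ∂μ := by
        congr 1; ext x; rw [hF_inner]; ring
    _ = v * ∫ x, D x ∂μ + ∫ x, (∫ z in Ico v u, F x z) ∂μ := by
        rw [integral_add (hD.const_mul v) (g := fun x => ∫ z in Ico v u, F x z)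
          hF.integral_prod_left, integral_const_mul]
    _ = v * ∫ x, D x ∂μ + ∫ z in v..u, ∫ x in {x | z < f x}, D x ∂μ := by
        rw [integral_integral_swap hF, intervalIntegral.integral_of_le hvu,
          ← integral_Ico_eq_integral_Ioc]
        simp only [hF_outer]

/-- Fisher consistency: with
`λ̃(α) = ∫₁^∞ [h̃(y^α)]ᵥᵘ dF̃_W(y; α0) - μ̃`, `μ̃ = v + ∫ᵥᵘ exp(-c0 (h̃^←(z) - 1)) dz`,
one has `λ̃(α0) = 0`. -/
theorem stmt10 (c0 α0 v u : ℝ) (hc0 : 0 < c0) (hα0 : 0 < α0)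
    (hv : -1 ≤ v) (hvu : v < u) :
    (∫ y in Ioi (1:ℝ), trunc v u (h c0 (y ^ α0)) * truncDens c0 α0 y)
      - (v + ∫ z in v..u, Real.exp (-c0 * (hinv c0 z - 1))) = 0 := by
  have hsurvival : ∀ z ∈ Ioc v u,
      ∫ t in {t | z < h c0 t}, c0 * exp (-c0 * (t - 1)) ∂(volume.restrict (Ioi 1))
        = exp (-c0 * (hinv c0 z - 1)) := fun z hz => by
    rw [Measure.restrict_restrict (measurableSet_lt measurable_const (measurable_h c0)),
      setOf_lt_h_inter_Ioi_one hc0 (hv.trans_lt hz.1), integral_exp_tail hc0]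
  rw [integral_comp_rpow_mul_truncDens hα0 c0 (fun t => trunc v u (h c0 t)),
    integral_trunc_comp_mul_eq (measurable_h c0) (integrableOn_exp_tail hc0 1) hvu.le,
    integral_exp_tail hc0, intervalIntegral.integral_of_le hvu.le,
    intervalIntegral.integral_of_le hvu.le, setIntegral_congr_fun measurableSet_Ioc hsurvival]
  simp
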